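/- For nonnegative integer n₁ and integer k, the coefficient of u^{n₁} in the formal power series T(u)^{n₁+1} e^{ku}, where T(u) = u/(1−e^{−u}), equals the generalized binomial coefficient C(n₁+k, n₁) = (n₁+k)(n₁+k−1)⋯(k+1)/n₁!. -/

import Mathlib

/-!
Write `c(n, a)` for the coefficient of `u^n` in `T(u)^(n+1) e^(au)`. The relation
`T (1 - e^(-u)) = u` and `e^(au) - e^((a-1)u) = e^(au) (1 - e^(-u))` give Pascal's rule
`c(n+1, a) - c(n+1, a-1) = c(n, a)`. Differentiating the relation gives `u T' + T² e^(-u) = T`,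
hence `T^(n+2) e^(-u) = T^(n+1) - u T^n T'`; since `(n+1) T^n T' = (T^(n+1))'` and
`[u^(n+1)] u F' = (n+1) [u^(n+1)] F`, the coefficient `c(n+1, -1)` vanishes. The numbers
`C(n+k, n)` obey the same rule, vanish at `k = -1` for `n ≥ 1`, and equal `1` for `n = 0`,
so the two agree for all integers `k` by induction on `n`.
-/

open Finset PowerSeries

/-- Generalized binomial coefficient `C(n+k, n) = (n+k)(n+k-1)⋯(k+1)/n!` for `k : ℤ`. -/
noncomputable def genChoose (k : ℤ) (n : ℕ) : ℚ :=
  (∏ i ∈ Finset.range n, ((k : ℚ) + 1 + i)) / n.factorial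

open scoped fwdDiff

theorem Int.eq_of_fwdDiff_eq {G : Type*} [AddCommGroup G] {f g : ℤ → G} (j₀ : ℤ)
    (h₀ : f j₀ = g j₀) (hΔ : Δ_[1] f = Δ_[1] g) : f = g := by
  have hstep (j : ℤ) : f (j + 1) - g (j + 1) = f j - g j :=
    sub_eq_sub_iff_sub_eq_sub.mp (congrFun hΔ j)
  funext j
  rw [← sub_eq_zero]
  induction j using Int.inductionOn' (b := j₀) with
  | zero => rw [h₀, sub_self]
  | succ j _ ih => rw [hstep, ih]
  | pred j _ ih => rw [← hstep, sub_add_cancel, ih]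

theorem genChoose_zero_right (k : ℤ) : genChoose k 0 = 1 := by
  simp [genChoose]

theorem genChoose_neg_one_succ (n : ℕ) : genChoose (-1) (n + 1) = 0 := by
  rw [genChoose, prod_range_succ', Int.cast_neg, Int.cast_one]
  simp

theorem genChoose_succ_succ (k : ℤ) (n : ℕ) :
    genChoose (k + 1) (n + 1) = genChoose k (n + 1) + genChoose (k + 1) n := by
  set P := ∏ i ∈ range n, ((k : ℚ) + 2 + i)
  have hP : ∏ i ∈ range n, (((k + 1 : ℤ) : ℚ) + 1 + i) = P :=
    prod_congr rfl fun i _ ↦ by push_cast; ring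
  have hP' : ∏ i ∈ range n, ((k : ℚ) + 1 + (i + 1 : ℕ)) = P :=
    prod_congr rfl fun i _ ↦ by push_cast; ring
  have hfac : ((n + 1).factorial : ℚ) = (n + 1) * n.factorial := by
    push_cast [Nat.factorial_succ]; ring
  simp only [genChoose]
  rw [prod_range_succ, prod_range_succ', hP, hP', hfac]
  push_cast
  field_simp
  ring

theorem fwdDiff_genChoose (n : ℕ) :
    Δ_[1] (fun k ↦ genChoose k (n + 1)) = fun k ↦ genChoose (k + 1) n := by
  funext k
  rw [fwdDiff, genChoose_succ_succ, add_sub_cancel_left]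

theorem PowerSeries.coeff_X_mul_derivative {R : Type*} [CommSemiring R] (f : R⟦X⟧) (n : ℕ) :
    coeff n (X * d⁄dX R f) = n * coeff n f := by
  cases n with
  | zero => simp
  | succ n => rw [coeff_succ_X_mul, coeff_derivative, mul_comm, Nat.cast_succ]

variable {A : Type*} [CommRing A] [Algebra ℚ A]

theorem PowerSeries.derivative_rescale_exp (a : A) :
    d⁄dX A (rescale a (exp A)) = a • rescale a (exp A) := by
  ext n
  simp only [coeff_derivative, coeff_rescale, coeff_exp, coeff_smul, smul_eq_mul]
  have hfac : ((n + 1 : ℕ) : A) * algebraMap ℚ A (1 / (n + 1).factorial) =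
      algebraMap ℚ A (1 / n.factorial) := by
    rw [← map_natCast (algebraMap ℚ A), ← map_mul]
    congr 1
    push_cast [Nat.factorial_succ]
    field_simp
  rw [← hfac]; push_cast; ring

theorem PowerSeries.constantCoeff_rescale_exp (a : A) :
    constantCoeff (rescale a (exp A)) = 1 := by
  rw [← coeff_zero_eq_constantCoeff_apply, coeff_rescale]; simp

-- `T(u) = u / (1 - e^(-u))`, stated without division.
def IsToddSeries (T : A⟦X⟧) : Prop := T * (1 - rescale (-1 : A) (exp A)) = X

namespace IsToddSeries

variable {T : A⟦X⟧}

theorem constantCoeff_eq_one (hT : IsToddSeries T) : constantCoeff T = 1 := by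
  have h := congrArg (coeff 1) hT
  rw [coeff_one_X, coeff_mul, Nat.sum_antidiagonal_eq_sum_range_succ_mk] at h
  simpa [sum_range_succ] using h

theorem X_mul_derivative_add_sq_mul (hT : IsToddSeries T) :
    X * d⁄dX A T + T ^ 2 * rescale (-1) (exp A) = T := by
  have hD : d⁄dX A T * (1 - rescale (-1) (exp A)) + T * rescale (-1) (exp A) = 1 := by
    have h := congrArg (d⁄dX A) hT
    rw [derivative_X, Derivation.leibniz, map_sub, Derivation.map_one_eq_zero,
      derivative_rescale_exp, neg_one_smul] at h
    linear_combination h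
  calc X * d⁄dX A T + T ^ 2 * rescale (-1) (exp A)
      = (d⁄dX A T * (1 - rescale (-1) (exp A)) + T * rescale (-1) (exp A)) * T := by
        rw [← hT]; ring
    _ = T := by rw [hD, one_mul]

theorem coeff_succ_pow_mul_rescale_neg_one (hT : IsToddSeries T) (n : ℕ) :
    coeff (n + 1) (T ^ (n + 2) * rescale (-1) (exp A)) = 0 := by
  have hX : ((n + 1 : ℕ) : A⟦X⟧) * (X * (T ^ n * d⁄dX A T)) =
      X * d⁄dX A (T ^ (n + 1)) := by
    rw [derivative_pow]; push_cast; ring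
  have hsplit :
      T ^ (n + 2) * rescale (-1) (exp A) = T ^ (n + 1) - X * (T ^ n * d⁄dX A T) := by
    linear_combination T ^ n * hT.X_mul_derivative_add_sq_mul
  have hunit : IsUnit ((n + 1 : ℕ) : A) := by
    simpa using ((Nat.cast_add_one_ne_zero n : ((n : ℚ) + 1) ≠ 0).isUnit.map (algebraMap ℚ A))
  apply hunit.mul_left_cancel
  have hcoeff := congrArg (coeff (n + 1)) hX
  rw [coeff_X_mul_derivative, ← map_natCast (C (R := A)), coeff_C_mul] at hcoeff
  rw [hsplit, mul_zero, map_sub, mul_sub, hcoeff, sub_self]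

theorem coeff_pow_mul_rescale_exp_add_one (hT : IsToddSeries T) (m n : ℕ) (a : A) :
    coeff (n + 1) (T ^ (m + 1) * rescale (a + 1) (exp A)) =
      coeff (n + 1) (T ^ (m + 1) * rescale a (exp A)) +
        coeff n (T ^ m * rescale (a + 1) (exp A)) := by
  have hshift : rescale a (exp A) = rescale (a + 1) (exp A) * rescale (-1) (exp A) := by
    rw [exp_mul_exp_eq_exp_add, add_neg_cancel_right]
  have h : T ^ (m + 1) * rescale (a + 1) (exp A) - T ^ (m + 1) * rescale a (exp A) =
      X * (T ^ m * rescale (a + 1) (exp A)) := by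
    rw [hshift, ← hT]; ring
  have hcoeff := congrArg (coeff (n + 1)) h
  rw [map_sub, coeff_succ_X_mul] at hcoeff
  rw [← hcoeff, add_sub_cancel]

theorem fwdDiff_coeff_pow_mul_rescale_exp (hT : IsToddSeries T) (n : ℕ) :
    Δ_[1] (fun k : ℤ ↦ coeff (n + 1) (T ^ (n + 2) * rescale (k : A) (exp A))) =
      fun k ↦ coeff n (T ^ (n + 1) * rescale ((k + 1 : ℤ) : A) (exp A)) := by
  funext k
  rw [fwdDiff, Int.cast_add, Int.cast_one, hT.coeff_pow_mul_rescale_exp_add_one,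
    add_sub_cancel_left]

end IsToddSeries

/-- Lemma 3.4 of the paper: the coefficient of `u^{n₁}` in `T(u)^{n₁+1} e^{ku}`,
where `T(u) = u/(1-e^{-u})`, equals the generalized binomial coefficient `C(n₁+k, n₁)`. -/
theorem stmt_9 (n₁ : ℕ) (k : ℤ) (T : PowerSeries ℚ)
    (hT : T * (1 - PowerSeries.rescale (-1 : ℚ) (PowerSeries.exp ℚ)) = PowerSeries.X) :
    PowerSeries.coeff n₁ (T ^ (n₁ + 1) * PowerSeries.rescale (k : ℚ) (PowerSeries.exp ℚ)) =
      genChoose k n₁ := by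
  have hTodd : IsToddSeries T := hT
  induction n₁ generalizing k with
  | zero =>
    simp [hTodd.constantCoeff_eq_one, constantCoeff_rescale_exp, genChoose_zero_right]
  | succ n ih =>
    have hcoeff : (fun j : ℤ ↦ coeff (n + 1) (T ^ (n + 2) * rescale (j : ℚ) (exp ℚ))) =
        fun j ↦ genChoose j (n + 1) := by
      refine Int.eq_of_fwdDiff_eq (-1) ?_ ?_
      · simpa [genChoose_neg_one_succ] using hTodd.coeff_succ_pow_mul_rescale_neg_one n
      · rw [hTodd.fwdDiff_coeff_pow_mul_rescale_exp, fwdDiff_genChoose]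
        exact funext fun j ↦ ih (j + 1)
    exact congrFun hcoeff k
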